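/- arXiv:2005.08707 — 7 statements merged into one kernel-verified Lean document; each statement's English description precedes it below -/
import Mathlib

section
/- Let F be a field, n ≥ 2, T a set, k ≤ n, t_1,...,t_k ∈ T, and let G = GL(n,F). Let u, v : T → F^n be maps in V(t_1,...,t_k), i.e., rk(u) = k = rank([u(t_1),...,u(t_k)]) and rk(v) = k = rank([v(t_1),...,v(t_k)]). Then u and v are G-equivalent (there exists g ∈ GL(n,F) with v(t) = g·u(t) for all t ∈ T) if and only if there exist row indices 1 ≤ i_1 < ... < i_k ≤ n and 1 ≤ j_1 < ... < j_k ≤ n such that det([u(t_1),...,u(t_k)]_{i_1,...,i_k}) ≠ 0, det([v(t_1),...,v(t_k)]_{j_1,...,j_k}) ≠ 0, and for all t ∈ T: ([u(t_1),...,u(t_k)]_{i_1,...,i_k})^{-1} u(t)_{i_1,...,i_k} = ([v(t_1),...,v(t_k)]_{j_1,...,j_k})^{-1} v(t)_{j_1,...,j_k}. -/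
open Matrix

/-- The `n × k` matrix whose columns are `u (ts 1), ..., u (ts k)`. -/
def colMat {F : Type*} [Field F] {T : Type*} {n k : ℕ} (u : T → Fin n → F) (ts : Fin k → T) :
    Matrix (Fin n) (Fin k) F :=
  Matrix.of fun i j => u (ts j) i

/-- The rank of a map `u : T → Fⁿ`: the dimension of the span of its image. -/
noncomputable def mapRank (F : Type*) [Field F] {T : Type*} {n : ℕ} (u : T → Fin n → F) : ℕ :=
  Module.finrank F (Submodule.span F (Set.range u))

/-! The rank conditions make `u (ts 1), …, u (ts k)` a basis of the span of `u`, so every `u t` has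
a unique coordinate vector `c t` in it. If `A_ι` is a nonsingular `k × k` minor of
`[u(t_1),…,u(t_k)]`, then `A_ι⁻¹ u(t)_ι = c t` whatever `ι` is, so the invariant is just `c`.
If `v = g u`, then `v` has the same coordinates as `u`. Conversely, two linearly independent
`k`-families in `Fⁿ` are related by some `g ∈ GL(n, F)`; such a `g` with `g u(t_j) = v(t_j)`
carries `u t = ∑ c t j • u(t_j)` to `∑ c t j • v(t_j) = v t` when the coordinates agree. -/

open Module Submodule

theorem Module.Basis.sumExtend_apply_inl {K V ι : Type*} [Field K] [AddCommGroup V] [Module K V]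
    {v : ι → V} (hv : LinearIndependent K v) (i : ι) : Basis.sumExtend hv (Sum.inl i) = v i := by
  simp only [Basis.sumExtend, Basis.reindex_apply, Basis.coe_extend]
  rfl

theorem exists_linearEquiv_comp_eq {K V ι : Type*} [Field K] [AddCommGroup V] [Module K V]
    [FiniteDimensional K V] {v w : ι → V} (hv : LinearIndependent K v)
    (hw : LinearIndependent K w) : ∃ e : V ≃ₗ[K] V, ⇑e ∘ v = w := by
  let bv := Basis.sumExtend hv
  let bw := Basis.sumExtend hw
  have := Module.Finite.finite_basis bv
  have := Module.Finite.finite_basis bw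
  have : Finite ι := hv.finite
  have := Finite.sum_right ι (β := Basis.sumExtendIndex hv)
  have := Finite.sum_right ι (β := Basis.sumExtendIndex hw)
  have hcard : Nat.card (Basis.sumExtendIndex hv) = Nat.card (Basis.sumExtendIndex hw) := by
    have := (finrank_eq_nat_card_basis bv).symm.trans (finrank_eq_nat_card_basis bw)
    rw [Nat.card_sum, Nat.card_sum] at this
    omega
  obtain ⟨eX⟩ := Finite.card_eq.mp hcard
  refine ⟨bv.equiv bw ((Equiv.refl ι).sumCongr eX), funext fun i => ?_⟩
  simpa [bv, bw, Basis.sumExtend_apply_inl] using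
    bv.equiv_apply (Sum.inl i) bw ((Equiv.refl ι).sumCongr eX)

namespace Matrix

variable {F : Type*} [Field F] {m l : Type*}

theorem linearIndependent_col_of_rank_eq_card [Fintype l] {A : Matrix m l F}
    (h : A.rank = Fintype.card l) : LinearIndependent F A.col := by
  rw [linearIndependent_iff_card_eq_finrank_span, Set.finrank, ← rank_eq_finrank_span_cols, h]

theorem exists_GL_mul_eq [Fintype m] [DecidableEq m] {A B : Matrix m l F}
    (hA : LinearIndependent F A.col) (hB : LinearIndependent F B.col) :
    ∃ g : GL m F, (g : Matrix m m F) * A = B := by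
  obtain ⟨e, he⟩ := exists_linearEquiv_comp_eq hA hB
  let g := GeneralLinearGroup.toLin.symm (LinearMap.GeneralLinearGroup.ofLinearEquiv e)
  have hg : ∀ x, (g : Matrix m m F) *ᵥ x = e x := by
    intro x
    rw [← mulVecLin_apply, ← GeneralLinearGroup.coe_toLin, MulEquiv.apply_symm_apply]
    rfl
  refine ⟨g, ext fun i j => ?_⟩
  exact congrFun ((hg (A.col j)).trans (congrFun he j)) i

theorem inv_submatrix_mulVec_mulVec_comp [Fintype l] [DecidableEq l] {A : Matrix m l F}
    {ι : l → m} (hdet : (A.submatrix ι id).det ≠ 0) (c : l → F) :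
    (A.submatrix ι id)⁻¹ *ᵥ (fun i => (A *ᵥ c) (ι i)) = c := by
  change (A.submatrix ι id)⁻¹ *ᵥ (A.submatrix ι id *ᵥ c) = c
  rw [mulVec_mulVec, nonsing_inv_mul _ (isUnit_iff_ne_zero.mpr hdet), one_mulVec]

theorem exists_strictMono_det_submatrix_ne_zero [Fintype m] [LinearOrder m] {k : ℕ}
    (M : Matrix m (Fin k) F) (h : M.rank = k) :
    ∃ ι : Fin k → m, StrictMono ι ∧ (M.submatrix ι id).det ≠ 0 := by
  classical
  obtain ⟨b, -, -, hspan, hli⟩ := exists_linearIndepOn_extension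
    (linearIndepOn_empty F M.row) (Set.empty_subset Set.univ)
  have hspan_eq : span F (M.row '' b) = span F (Set.range M.row) :=
    le_antisymm (span_mono (Set.image_subset_range _ _))
      (span_le.mpr (by rwa [Set.image_univ] at hspan))
  have hcard : b.toFinset.card = k := by
    rw [Set.toFinset_card, linearIndependent_iff_card_eq_finrank_span.mp hli, Set.finrank,
      ← Set.image_eq_range M.row b, hspan_eq, ← rank_eq_finrank_span_row, h]
  let ι := b.toFinset.orderEmbOfFin hcard
  have hrows : LinearIndependent F (M.submatrix ι id).row :=
    (linearIndepOn_range_iff ι.injective M.row).mp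
      (by rwa [Finset.range_orderEmbOfFin, Set.coe_toFinset])
  exact ⟨ι, ι.strictMono,
    ((isUnit_iff_isUnit_det _).mp (linearIndependent_rows_iff_isUnit.mp hrows)).ne_zero⟩

end Matrix

section colMat

variable {F T : Type*} [Field F] {n k : ℕ}

theorem colMat_mulVec (M : Matrix (Fin n) (Fin n) F) (u : T → Fin n → F) (ts : Fin k → T) :
    colMat (fun t => M *ᵥ u t) ts = M * colMat u ts := by
  ext i j
  simp [colMat, mulVec, dotProduct, mul_apply]

theorem exists_colMat_mulVec_eq {u : T → Fin n → F} {ts : Fin k → T}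
    (h : (colMat u ts).rank = mapRank F u) (t : T) : ∃ c, colMat u ts *ᵥ c = u t := by
  change u t ∈ LinearMap.range (colMat u ts).mulVecLin
  have hle : span F (Set.range (colMat u ts).col) ≤ span F (Set.range u) :=
    span_mono (Set.range_comp_subset_range ts u)
  rw [range_mulVecLin, eq_of_le_of_finrank_eq hle (by rw [← rank_eq_finrank_span_cols, h, mapRank])]
  exact subset_span ⟨t, rfl⟩

end colMat

theorem GL_equivalent_iff_invariants_general {F : Type*} [Field F] {T : Type*} {n k : ℕ}
    (ts : Fin k → T) (u v : T → Fin n → F)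
    (hu : mapRank F u = k) (hU : (colMat u ts).rank = k)
    (hv : mapRank F v = k) (hV : (colMat v ts).rank = k) :
    (∃ g : GL (Fin n) F, ∀ t : T, v t = (g : Matrix (Fin n) (Fin n) F).mulVec (u t)) ↔
      ∃ ι ι' : Fin k → Fin n, StrictMono ι ∧ StrictMono ι' ∧
        ((colMat u ts).submatrix ι id).det ≠ 0 ∧
        ((colMat v ts).submatrix ι' id).det ≠ 0 ∧
        ∀ t : T,
          ((colMat u ts).submatrix ι id)⁻¹.mulVec (fun m => u t (ι m)) =
            ((colMat v ts).submatrix ι' id)⁻¹.mulVec (fun m => v t (ι' m)) := by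
  have hrepu := exists_colMat_mulVec_eq (hU.trans hu.symm)
  have hrepv := exists_colMat_mulVec_eq (hV.trans hv.symm)
  obtain ⟨ι, hι, hdet⟩ := exists_strictMono_det_submatrix_ne_zero _ hU
  obtain ⟨ι', hι', hdet'⟩ := exists_strictMono_det_submatrix_ne_zero _ hV
  constructor
  · rintro ⟨g, hg⟩
    have hvu : colMat v ts = (g : Matrix (Fin n) (Fin n) F) * colMat u ts := by
      rw [← colMat_mulVec]
      exact congrArg (colMat · ts) (funext hg)
    refine ⟨ι, ι', hι, hι', hdet, hdet', fun t => ?_⟩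
    obtain ⟨c, hc⟩ := hrepu t
    rw [hg t, ← hc, mulVec_mulVec, ← hvu, inv_submatrix_mulVec_mulVec_comp hdet,
      inv_submatrix_mulVec_mulVec_comp hdet']
  · rintro ⟨ι, ι', -, -, hdet, hdet', hinv⟩
    obtain ⟨g, hg⟩ := exists_GL_mul_eq
      (linearIndependent_col_of_rank_eq_card (hU.trans (Fintype.card_fin k).symm))
      (linearIndependent_col_of_rank_eq_card (hV.trans (Fintype.card_fin k).symm))
    refine ⟨g, fun t => ?_⟩
    obtain ⟨c, hc⟩ := hrepu t
    obtain ⟨d, hd⟩ := hrepv t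
    have hcd : c = d := by
      simpa only [← hc, ← hd, inv_submatrix_mulVec_mulVec_comp hdet,
        inv_submatrix_mulVec_mulVec_comp hdet'] using hinv t
    rw [← hc, ← hd, hcd, mulVec_mulVec, hg]

/-- Theorem 1: for `u, v ∈ V(t_1,...,t_k)`, the maps `u` and `v` are
`GL(n,F)`-equivalent iff there are strictly increasing row-index choices `ι, ι'` with
nonsingular corresponding minors such that
`([u(t_1),...,u(t_k)]_ι)⁻¹ u(t)_ι = ([v(t_1),...,v(t_k)]_{ι'})⁻¹ v(t)_{ι'}` for all `t`. -/
theorem GL_equivalent_iff_invariants {F : Type*} [Field F] {T : Type*} {n k : ℕ}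
    (hn : 2 ≤ n) (hk : k ≤ n) (ts : Fin k → T) (u v : T → Fin n → F)
    (hu : mapRank F u = k) (hU : (colMat u ts).rank = k)
    (hv : mapRank F v = k) (hV : (colMat v ts).rank = k) :
    (∃ g : GL (Fin n) F, ∀ t : T, v t = (g : Matrix (Fin n) (Fin n) F).mulVec (u t)) ↔
      ∃ ι ι' : Fin k → Fin n, StrictMono ι ∧ StrictMono ι' ∧
        ((colMat u ts).submatrix ι id).det ≠ 0 ∧
        ((colMat v ts).submatrix ι' id).det ≠ 0 ∧
        ∀ t : T,
          ((colMat u ts).submatrix ι id)⁻¹.mulVec (fun m => u t (ι m)) =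
            ((colMat v ts).submatrix ι' id)⁻¹.mulVec (fun m => v t (ι' m)) :=
  GL_equivalent_iff_invariants_general ts u v hu hU hv hV
end

section
/- Let F be an infinite field, n ≥ 2, 1 ≤ k ≤ n, and let K = F(x(t), x(t_1),...,x(t_k)) be the field of rational functions over F in the n(k+1) variables given by the components of the vector variables x(t), x(t_1),...,x(t_k). Then the k components of the vector ([x(t_1),...,x(t_k)]_{1,2,...,k})^{-1} x(t)_{1,2,...,k} are algebraically independent over F. -/
/-!
Write `A` for the generic `k × k` matrix and `b` for the generic vector, so that the family in
question is `y = A⁻¹ b`, i.e. the solution of `A y = b`. This solution already lives in the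
localization `R[1/det A]` of the polynomial ring, and the specialization `A ↦ 1` (leaving `b`
alone) extends to it because it sends `det A` to `1`. It sends `y` to `b`, a family of distinct
variables, so `y` is algebraically independent in the localization, hence in the fraction field,
into which the localization embeds.
-/

open Matrix MvPolynomial

noncomputable section

/-- The component `x_i` of a vector variable `x` (the pair `(i, c)` meaning component `i` of
the vector variable named `c`), as an element of the rational function field. -/
def Xv {F : Type*} [Field F] {n : ℕ} {C : Type*} (v : Fin n × C) :
    FractionRing (MvPolynomial (Fin n × C) F) :=
  algebraMap (MvPolynomial (Fin n × C) F) _ (MvPolynomial.X v)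

section

variable {F : Type*} [CommRing F] {ι : Type*} [Fintype ι] [DecidableEq ι]

theorem comp_inv_mulVec {A A' G : Type*} [CommRing A] [CommRing A'] [FunLike G A A']
    [RingHomClass G A A'] (f : G) {N : Matrix ι ι A} (hN : IsUnit N.det) (c : ι → A) :
    f ∘ (N⁻¹ *ᵥ c) = (N.map f)⁻¹ *ᵥ (f ∘ c) := by
  have hfN : IsUnit (N.map f).det := (f : A →+* A').map_det N ▸ hN.map f
  have : N.map f *ᵥ (f ∘ (N⁻¹ *ᵥ c)) = f ∘ c := funext fun i => by
    rw [← RingHom.coe_coe f, ← RingHom.map_mulVec, mulVec_mulVec, mul_nonsing_inv _ hN,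
      one_mulVec, Function.comp_apply]
  rw [← this, mulVec_mulVec, nonsing_inv_mul _ hfN, one_mulVec]

theorem map_det_eq_one_of_map_eq_one {R B G : Type*} [CommRing R] [CommRing B] [FunLike G R B]
    [RingHomClass G R B] (f : G) {M : Matrix ι ι R} (hM : M.map f = 1) : f M.det = 1 := by
  rw [← RingHom.coe_coe f, RingHom.map_det, RingHom.mapMatrix_apply, RingHom.coe_coe, hM, det_one]

theorem AlgebraicIndependent.of_mulVec_eq_of_map_eq_one {A B : Type*} [CommRing A]
    [Algebra F A] [CommRing B] [Algebra F B] (ψ : A →ₐ[F] B) {N : Matrix ι ι A}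
    {y c : ι → A} (hy : N *ᵥ y = c) (hN : N.map ψ = 1)
    (hc : AlgebraicIndependent F (ψ ∘ c)) :
    AlgebraicIndependent F y := by
  have hψy : ψ ∘ y = ψ ∘ c := funext fun i => by
    simpa [hy, hN] using (RingHom.map_mulVec (ψ : A →+* B) N y i).symm
  exact .of_comp ψ (hψy ▸ hc)

theorem IsLocalization.lift_algebraMap_injective {R S K : Type*} [CommRing R] [CommRing S]
    [Algebra R S] {M : Submonoid R} [IsLocalization M S] (hM : M ≤ nonZeroDivisors R)
    [CommRing K] [Algebra R K] [IsFractionRing R K] :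
    Function.Injective (IsLocalization.lift (M := M) (S := S) (g := algebraMap R K)
      fun y => IsLocalization.map_units K (⟨y, hM y.2⟩ : nonZeroDivisors R)) := by
  rw [IsLocalization.lift_injective_iff]
  intro x y
  rw [(IsLocalization.injective S hM).eq_iff, (IsFractionRing.injective R K).eq_iff]

theorem isUnit_det_map_algebraMap {R : Type*} [CommRing R] (M : Matrix ι ι R) (S : Type*)
    [CommRing S] [Algebra R S] [IsLocalization.Away M.det S] :
    IsUnit (M.map (algebraMap R S)).det :=
  (algebraMap R S).map_det M ▸ IsLocalization.Away.algebraMap_isUnit M.det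

variable {R : Type*} [CommRing R] [Algebra F R] {B : Type*} [CommRing B] [Algebra F B]
  (ev : R →ₐ[F] B) {M : Matrix ι ι R} (hM : M.map ev = 1) {b : ι → R}
  (hb : AlgebraicIndependent F (ev ∘ b))
include hM hb

theorem algebraicIndependent_inv_mulVec_of_isLocalizationAway (S : Type*) [CommRing S]
    [Algebra R S] [IsLocalization.Away M.det S] [Algebra F S] [IsScalarTower F R S] :
    AlgebraicIndependent F ((M.map (algebraMap R S))⁻¹ *ᵥ (algebraMap R S ∘ b)) := by
  have hdet := map_det_eq_one_of_map_eq_one ev hM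
  let ψ : S →ₐ[F] B := IsLocalization.liftAlgHom (M := .powers M.det) (f := ev) <| by
    rintro ⟨_, m, rfl⟩
    simp [hdet]
  have hψ : ψ ∘ algebraMap R S = ev := funext (IsLocalization.lift_eq _)
  refine .of_mulVec_eq_of_map_eq_one ψ (N := M.map (algebraMap R S)) (c := algebraMap R S ∘ b)
    ?_ ?_ ?_
  · rw [mulVec_mulVec, mul_nonsing_inv _ (isUnit_det_map_algebraMap M S), one_mulVec]
  · rw [Matrix.map_map, hψ, hM]
  · rwa [← Function.comp_assoc, hψ]

theorem algebraicIndependent_inv_mulVec_of_map_eq_one [IsDomain R] [Nontrivial B] (K : Type*)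
    [CommRing K] [Algebra R K] [IsFractionRing R K] [Algebra F K] [IsScalarTower F R K] :
    AlgebraicIndependent F ((M.map (algebraMap R K))⁻¹ *ᵥ (algebraMap R K ∘ b)) := by
  have hdet : M.det ≠ 0 := fun h => by
    simpa [h] using map_det_eq_one_of_map_eq_one ev hM
  have hpow := powers_le_nonZeroDivisors_of_noZeroDivisors hdet
  let S := Localization.Away M.det
  let toK : S →ₐ[F] K := IsLocalization.liftAlgHom (f := IsScalarTower.toAlgHom F R K)
    fun y => IsLocalization.map_units K (⟨y, hpow y.2⟩ : nonZeroDivisors R)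
  have htoK : toK ∘ algebraMap R S = algebraMap R K := funext (IsLocalization.lift_eq _)
  have htoK_inj : Function.Injective toK := IsLocalization.lift_algebraMap_injective hpow
  have := (algebraicIndependent_inv_mulVec_of_isLocalizationAway ev hM hb S).map' htoK_inj
  rwa [comp_inv_mulVec toK (isUnit_det_map_algebraMap M S), Matrix.map_map,
    ← Function.comp_assoc, htoK] at this

end

/-- The vector variable `x(t)` is named `none` and `x(t_j)` is named `some j`. -/
theorem invariants_algebraicIndependent_general {F : Type*} [Field F] {n k : ℕ} (hkn : k ≤ n) :
    AlgebraicIndependent F (fun l : Fin k =>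
      (Matrix.of fun i j : Fin k =>
          Xv (F := F) (Fin.castLE hkn i, some j))⁻¹.mulVec
        (fun i : Fin k => Xv (F := F) (Fin.castLE hkn i, (none : Option (Fin k)))) l) := by
  let ev : MvPolynomial (Fin n × Option (Fin k)) F →ₐ[F]
      MvPolynomial (Fin n × Option (Fin k)) F :=
    aeval fun v => v.2.elim (X v) fun j => if Fin.castLE hkn j = v.1 then 1 else 0
  have hinj : Function.Injective fun i : Fin k => (Fin.castLE hkn i, (none : Option (Fin k))) :=
    fun i j h => Fin.castLE_injective hkn (congrArg Prod.fst h)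
  refine algebraicIndependent_inv_mulVec_of_map_eq_one ev
    (M := .of fun i j => X (Fin.castLE hkn i, some j)) (b := fun i => X (Fin.castLE hkn i, none))
    ?_ ?_ _
  · ext i j
    simp [ev, one_apply, (Fin.castLE_injective hkn).eq_iff, eq_comm]
  · convert (algebraicIndependent_X _ F).comp _ hinj using 1
    ext i
    simp [ev]

/-- part of Theorem 3: for an infinite field `F`, the `k` components of the
vector `([x(t_1),...,x(t_k)]_{1,...,k})⁻¹ x(t)_{1,...,k}` in the field of rational functions
in the vector variables `x(t), x(t_1), ..., x(t_k)` (the variable `x(t)` is named `none` and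
`x(t_j)` is named `some j`) are algebraically independent over `F`. -/
theorem invariants_algebraicIndependent {F : Type*} [Field F] [Infinite F] {n k : ℕ}
    (hn : 2 ≤ n) (hk1 : 1 ≤ k) (hkn : k ≤ n) :
    AlgebraicIndependent F (fun l : Fin k =>
      (Matrix.of fun i j : Fin k =>
          Xv (F := F) (Fin.castLE hkn i, some j))⁻¹.mulVec
        (fun i : Fin k => Xv (F := F) (Fin.castLE hkn i, (none : Option (Fin k)))) l) :=
  invariants_algebraicIndependent_general hkn

end
end

section
/- Let F be a field, n ≥ 2, T and S sets, k ≤ n, and G = GL(n,F). Fix t_{1,s_1},...,t_{k,s_k} ∈ T with s_1,...,s_k ∈ S. Let (u_s)_{s∈S} and (v_s)_{s∈S} be families of maps T → F^n belonging to V(t_{1,s_1},...,t_{k,s_k}), i.e., rk((u_s)) = rank([u_{s_1}(t_{1,s_1}),...,u_{s_k}(t_{k,s_k})]) = k, and likewise for (v_s). Then (u_s) ≃^G (v_s) (there exists g ∈ GL(n,F) with g·u_s(t) = v_s(t) for all s ∈ S, t ∈ T) if and only if there exist 1 ≤ i_1 < ... < i_k ≤ n and 1 ≤ j_1 < ... <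 j_k ≤ n such that det([u_{s_1}(t_{1,s_1}),...,u_{s_k}(t_{k,s_k})]_{i_1,...,i_k}) ≠ 0, det([v_{s_1}(t_{1,s_1}),...,v_{s_k}(t_{k,s_k})]_{j_1,...,j_k}) ≠ 0, and ([u_{s_1}(t_{1,s_1}),...,u_{s_k}(t_{k,s_k})]_{i_1,...,i_k})^{-1} u_s(t)_{i_1,...,i_k} = ([v_{s_1}(t_{1,s_1}),...,v_{s_k}(t_{k,s_k})]_{j_1,...,j_k})^{-1} v_s(t)_{j_1,...,j_k} for all t ∈ T and s ∈ S. -/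
open Matrix

/-- The `n × k` matrix whose columns are `u_{s_j}(t_{j,s_j})`, `j = 1, ..., k`. -/
def famColMat {F : Type*} [Field F] {T S : Type*} {n k : ℕ}
    (u : S → T → Fin n → F) (ss : Fin k → S) (ts : Fin k → T) :
    Matrix (Fin n) (Fin k) F :=
  Matrix.of fun i j => u (ss j) (ts j) i

/-- The rank of a family of maps `(u_s : T → Fⁿ)_{s ∈ S}`:
the dimension of `Span {u_s(t) : t ∈ T, s ∈ S}`. -/
noncomputable def famRank (F : Type*) [Field F] {T S : Type*} {n : ℕ}
    (u : S → T → Fin n → F) : ℕ :=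
  Module.finrank F (Submodule.span F (Set.range fun p : S × T => u p.1 p.2))

/-!
Write `U = famColMat u ss ts`. Since `famRank F u = rank U = k`, the columns of `U` form a basis
of the span of all the `u s t`, so `u s t = U *ᵥ c` for a unique coordinate vector `c`, and any
nonsingular `k × k` minor `U_ι` recovers it as `U_ι⁻¹ *ᵥ (u s t)_ι`. The invariants of the theorem
are therefore these coordinates. If `g *ᵥ u s t = v s t` for all `s, t`, then `g * U = V` and
`v s t = V *ᵥ c`, so the coordinates agree. Conversely, two `n × k` matrices of rank `k` satisfy
`g * U = V` for some `g ∈ GL(n, F)`, and equal coordinates give `g *ᵥ u s t = V *ᵥ c = v s t`.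
-/

theorem LinearIndependent.exists_linearEquiv_apply_eq {K V ι : Type*} [Field K] [AddCommGroup V]
    [Module K V] [Finite ι] {v w : ι → V} (hv : LinearIndependent K v)
    (hw : LinearIndependent K w) : ∃ g : V ≃ₗ[K] V, ∀ i, g (v i) = w i := by
  have := FiniteDimensional.span_of_finite K (Set.finite_range v)
  obtain ⟨g, hg⟩ := Submodule.exists_linearEquiv_restrict_eq
    (hv.linearCombinationEquiv.symm ≪≫ₗ hw.linearCombinationEquiv)
  refine ⟨g, fun i => ?_⟩
  simpa using (hg (hv.linearCombinationEquiv (Finsupp.single i 1))).symm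

namespace Matrix

variable {R : Type*}

theorem inv_submatrix_mulVec_mulVec [CommRing R] {m n : Type*} [Fintype n] [DecidableEq n]
    (A : Matrix m n R) (ι : n → m) (h : IsUnit (A.submatrix ι id).det) (c : n → R) :
    (A.submatrix ι id)⁻¹ *ᵥ (fun i => (A *ᵥ c) (ι i)) = c := by
  change (A.submatrix ι id)⁻¹ *ᵥ (A.submatrix ι id *ᵥ c) = c
  rw [mulVec_mulVec, nonsing_inv_mul _ h, one_mulVec]

theorem linearIndependent_col_of_rank_eq [Field R] {m n : Type*} [Fintype n]
    (A : Matrix m n R) (hA : A.rank = Fintype.card n) : LinearIndependent R A.col := by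
  rw [linearIndependent_iff_card_eq_finrank_span, Set.finrank, ← rank_eq_finrank_span_cols, hA]

theorem exists_strictMono_det_submatrix_ne_zero_s6 [Field R] {n k : ℕ}
    (A : Matrix (Fin n) (Fin k) R) (hA : A.rank = k) :
    ∃ ι : Fin k → Fin n, StrictMono ι ∧ (A.submatrix ι id).det ≠ 0 := by
  classical
  obtain ⟨κ, a, ha, hspan, hli⟩ := exists_linearIndependent' R A.row
  have : Fintype κ := Fintype.ofInjective a ha
  set t := Finset.univ.map ⟨a, ha⟩
  have ht : t.card = k := by
    rw [Finset.card_map, Finset.card_univ, linearIndependent_iff_card_eq_finrank_span.mp hli,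
      Set.finrank, hspan, ← rank_eq_finrank_span_row, hA]
  set ι := t.orderEmbOfFin ht
  refine ⟨ι, ι.strictMono, ?_⟩
  rw [← isUnit_iff_ne_zero, ← isUnit_iff_isUnit_det, ← linearIndependent_rows_iff_isUnit]
  have hmem (i : Fin k) : ∃ x, a x = ι i := by
    simpa [t] using (Finset.mem_map.mp (t.orderEmbOfFin_mem ht i))
  choose σ hσ using hmem
  have hrow : (A.submatrix ι id).row = (A.row ∘ a) ∘ σ := by
    ext i j
    simp [hσ]
  rw [hrow]
  exact hli.comp σ fun i j hij => ι.injective (by rw [← hσ, ← hσ, hij])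

theorem exists_GL_mul_eq_of_rank_eq [Field R] {m n : Type*} [Fintype m] [DecidableEq m]
    [Fintype n] {U V : Matrix m n R} (hU : U.rank = Fintype.card n)
    (hV : V.rank = Fintype.card n) : ∃ g : GL m R, (g : Matrix m m R) * U = V := by
  obtain ⟨e, he⟩ := (U.linearIndependent_col_of_rank_eq hU).exists_linearEquiv_apply_eq
    (V.linearIndependent_col_of_rank_eq hV)
  let g : GL m R := GeneralLinearGroup.toLin.symm (LinearMap.GeneralLinearGroup.ofLinearEquiv e)
  have hg (x : m → R) : (g : Matrix m m R) *ᵥ x = e x := by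
    simp [g, GeneralLinearGroup.toLin, LinearMap.toMatrixAlgEquiv', LinearMap.toMatrix'_mulVec]
  refine ⟨g, ?_⟩
  ext i j
  exact congrFun ((hg _).trans (he j)) i

end Matrix

section Families

variable {F : Type*} [Field F] {T S : Type*} {n k : ℕ}

theorem mul_famColMat {m : ℕ} (M : Matrix (Fin m) (Fin n) F) (u : S → T → Fin n → F)
    (ss : Fin k → S) (ts : Fin k → T) :
    M * famColMat u ss ts = famColMat (fun s t => M *ᵥ u s t) ss ts := by
  ext i j
  simp [famColMat, mul_apply, mulVec, dotProduct]

theorem exists_famColMat_mulVec_eq {u : S → T → Fin n → F} {ss : Fin k → S} {ts : Fin k → T}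
    (hu : famRank F u = k) (hU : (famColMat u ss ts).rank = k) (s : S) (t : T) :
    ∃ c, famColMat u ss ts *ᵥ c = u s t := by
  have hspan : Submodule.span F (Set.range (famColMat u ss ts).col) =
      Submodule.span F (Set.range fun p : S × T => u p.1 p.2) := by
    refine Submodule.eq_of_le_of_finrank_le
      (Submodule.span_mono (Set.range_subset_iff.2 fun j => ⟨(ss j, ts j), rfl⟩)) ?_
    rw [← rank_eq_finrank_span_cols, hU]
    exact hu.le
  show u s t ∈ LinearMap.range (famColMat u ss ts).mulVecLin
  rw [range_mulVecLin, hspan]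
  exact Submodule.subset_span ⟨(s, t), rfl⟩

end Families

theorem families_GL_equivalent_iff_invariants_general {F : Type*} [Field F] {T S : Type*} {n k : ℕ}
    (ss : Fin k → S) (ts : Fin k → T)
    (u v : S → T → Fin n → F)
    (hu : famRank F u = k) (hU : (famColMat u ss ts).rank = k)
    (hv : famRank F v = k) (hV : (famColMat v ss ts).rank = k) :
    (∃ g : GL (Fin n) F, ∀ s : S, ∀ t : T,
        (g : Matrix (Fin n) (Fin n) F).mulVec (u s t) = v s t) ↔
      ∃ ι ι' : Fin k → Fin n, StrictMono ι ∧ StrictMono ι' ∧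
        ((famColMat u ss ts).submatrix ι id).det ≠ 0 ∧
        ((famColMat v ss ts).submatrix ι' id).det ≠ 0 ∧
        ∀ s : S, ∀ t : T,
          ((famColMat u ss ts).submatrix ι id)⁻¹.mulVec (fun m => u s t (ι m)) =
            ((famColMat v ss ts).submatrix ι' id)⁻¹.mulVec (fun m => v s t (ι' m)) := by
  set U := famColMat u ss ts
  set V := famColMat v ss ts
  constructor
  · rintro ⟨g, hg⟩
    have hgU : (g : Matrix (Fin n) (Fin n) F) * U = V := by
      rw [mul_famColMat]
      simp only [hg]
      rfl
    obtain ⟨ι, hι, hdU⟩ := U.exists_strictMono_det_submatrix_ne_zero_s6 hU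
    obtain ⟨ι', hι', hdV⟩ := V.exists_strictMono_det_submatrix_ne_zero_s6 hV
    refine ⟨ι, ι', hι, hι', hdU, hdV, fun s t => ?_⟩
    obtain ⟨c, hc⟩ : ∃ c, U *ᵥ c = u s t := exists_famColMat_mulVec_eq hu hU s t
    have hvc : V *ᵥ c = v s t := by rw [← hgU, ← mulVec_mulVec, hc, hg]
    rw [← hc, ← hvc, U.inv_submatrix_mulVec_mulVec ι hdU.isUnit,
      V.inv_submatrix_mulVec_mulVec ι' hdV.isUnit]
  · rintro ⟨ι, ι', -, -, hdU, hdV, hinv⟩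
    obtain ⟨g, hgU⟩ := exists_GL_mul_eq_of_rank_eq (hU.trans (Fintype.card_fin k).symm)
      (hV.trans (Fintype.card_fin k).symm)
    refine ⟨g, fun s t => ?_⟩
    obtain ⟨c, hc⟩ : ∃ c, U *ᵥ c = u s t := exists_famColMat_mulVec_eq hu hU s t
    obtain ⟨c', hc'⟩ : ∃ c', V *ᵥ c' = v s t := exists_famColMat_mulVec_eq hv hV s t
    have hcc : c = c' := by
      simpa only [← hc, ← hc', U.inv_submatrix_mulVec_mulVec ι hdU.isUnit,
        V.inv_submatrix_mulVec_mulVec ι' hdV.isUnit] using hinv s t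
    rw [← hc, mulVec_mulVec, hgU, hcc, hc']

/-- Theorem 4: two families `(u_s), (v_s) ∈ V(t_{1,s_1},...,t_{k,s_k})` are
`GL(n,F)`-equivalent iff there are strictly increasing row-index choices `ι, ι'` with
nonsingular minors such that
`([u_{s_1}(t_{1,s_1}),...]_ι)⁻¹ u_s(t)_ι = ([v_{s_1}(t_{1,s_1}),...]_{ι'})⁻¹ v_s(t)_{ι'}`
for all `t ∈ T`, `s ∈ S`. -/
theorem families_GL_equivalent_iff_invariants {F : Type*} [Field F] {T S : Type*} {n k : ℕ}
    (hn : 2 ≤ n) (hk : k ≤ n) (ss : Fin k → S) (ts : Fin k → T)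
    (u v : S → T → Fin n → F)
    (hu : famRank F u = k) (hU : (famColMat u ss ts).rank = k)
    (hv : famRank F v = k) (hV : (famColMat v ss ts).rank = k) :
    (∃ g : GL (Fin n) F, ∀ s : S, ∀ t : T,
        (g : Matrix (Fin n) (Fin n) F).mulVec (u s t) = v s t) ↔
      ∃ ι ι' : Fin k → Fin n, StrictMono ι ∧ StrictMono ι' ∧
        ((famColMat u ss ts).submatrix ι id).det ≠ 0 ∧
        ((famColMat v ss ts).submatrix ι' id).det ≠ 0 ∧
        ∀ s : S, ∀ t : T,
          ((famColMat u ss ts).submatrix ι id)⁻¹.mulVec (fun m => u s t (ι m)) =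
            ((famColMat v ss ts).submatrix ι' id)⁻¹.mulVec (fun m => v s t (ι' m)) :=
  families_GL_equivalent_iff_invariants_general ss ts u v hu hU hv hV
end

section
/- Let F be an infinite field, n ≥ 2, 1 ≤ k ≤ n, S a set, s_1,...,s_k ∈ S, and let K = F((x_s(t))_{s∈S}, x_{s_1}(t_{1,s_1}),...,x_{s_k}(t_{k,s_k})) be the field of rational functions over F in the components of the vector variables x_s(t), s ∈ S, and x_{s_j}(t_{j,s_j}), j = 1,...,k. Then the family of all components of the vectors ([x_{s_1}(t_{1,s_1}),...,x_{s_k}(t_{k,s_k})]_{1,2,...,k})^{-1} x_s(t)_{1,2,...,k}, s ∈ S, is algebraically independent over F. -/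
open Matrix MvPolynomial

noncomputable section

set_option maxHeartbeats 2000000 in
set_option synthInstance.maxHeartbeats 200000 in
/-- part of Theorem 6: for an infinite field `F`, the components of the vectors
`([x_{s_1}(t_{1,s_1}),...,x_{s_k}(t_{k,s_k})]_{1,...,k})⁻¹ x_s(t)_{1,...,k}`, `s ∈ S`, in the
field of rational functions in the vector variables `x_s(t)` (`s ∈ S`, named `Sum.inl s`) and
`x_{s_j}(t_{j,s_j})` (`j = 1,...,k`, named `Sum.inr j`) are algebraically independent
over `F`. -/
theorem invariants_algebraicIndependent_families {F : Type*} [Field F] [Infinite F]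
    {S : Type*} {n k : ℕ} (hn : 2 ≤ n) (hk1 : 1 ≤ k) (hkn : k ≤ n) :
    AlgebraicIndependent F (fun p : S × Fin k =>
      (Matrix.of fun i j : Fin k =>
          Xv (F := F) (Fin.castLE hkn i, (Sum.inr j : S ⊕ Fin k)))⁻¹.mulVec
        (fun i : Fin k => Xv (F := F) (Fin.castLE hkn i, (Sum.inl p.1 : S ⊕ Fin k)))
        p.2) := by
  classical
  -- the matrix of variables over the polynomial ring
  set M : Matrix (Fin k) (Fin k) (MvPolynomial (Fin n × (S ⊕ Fin k)) F) :=
    Matrix.of (fun i j : Fin k =>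
      MvPolynomial.X (Fin.castLE hkn i, (Sum.inr j : S ⊕ Fin k))) with hM
  set d : (MvPolynomial (Fin n × (S ⊕ Fin k)) F) := M.det with hd
  -- numerators
  set z : S × Fin k → (MvPolynomial (Fin n × (S ⊕ Fin k)) F) := fun p =>
    (M.adjugate.mulVec fun i : Fin k =>
      MvPolynomial.X (Fin.castLE hkn i, (Sum.inl p.1 : S ⊕ Fin k))) p.2 with hz
  -- the specialization sending the matrix variables to the identity matrix
  set ψ : (MvPolynomial (Fin n × (S ⊕ Fin k)) F) →ₐ[F] MvPolynomial (Fin n × S) F :=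
    MvPolynomial.aeval (fun v : Fin n × (S ⊕ Fin k) =>
      Sum.elim (fun s : S => (MvPolynomial.X (v.1, s) : MvPolynomial (Fin n × S) F))
        (fun j : Fin k => if (Fin.castLE hkn j : Fin n) = v.1 then 1 else 0) v.2) with hψ
  have hψM : M.map ψ = 1 := by
    refine Matrix.ext fun i j => ?_
    simp only [Matrix.map_apply, hM, Matrix.of_apply, hψ, MvPolynomial.aeval_X, Sum.elim_inr,
      Matrix.one_apply, Fin.castLE_inj]
    by_cases h' : i = j
    · simp [h', MvPolynomial.bind₁_X_right]
    · simp [h', Ne.symm h', MvPolynomial.bind₁_X_right, Fin.castLE_inj]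
  have hψd : ψ d = 1 := by
    have h1 := ψ.map_det M
    rw [AlgHom.mapMatrix_apply, hψM, Matrix.det_one] at h1
    rw [hd, h1]
  have hd0 : d ≠ 0 := by
    intro h
    rw [h, map_zero] at hψd
    exact zero_ne_one hψd
  have hmv : ∀ (A : Matrix (Fin k) (Fin k) (MvPolynomial (Fin n × (S ⊕ Fin k)) F)) (v : Fin k → (MvPolynomial (Fin n × (S ⊕ Fin k)) F)) (i : Fin k),
      ψ ((A.mulVec v) i) = ((A.map ψ).mulVec fun j => ψ (v j)) i := by
    intro A v i
    simp [Matrix.mulVec, dotProduct, map_sum]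
  have hadj : M.adjugate.map ψ = 1 := by
    have h1 := ψ.map_adjugate M
    rw [AlgHom.mapMatrix_apply, AlgHom.mapMatrix_apply, hψM, Matrix.adjugate_one] at h1
    exact h1
  have hψz : ∀ p : S × Fin k, ψ (z p) = MvPolynomial.X (Fin.castLE hkn p.2, p.1) := by
    intro p
    rw [hz]
    show ψ ((M.adjugate.mulVec fun i : Fin k =>
      MvPolynomial.X (Fin.castLE hkn i, (Sum.inl p.1 : S ⊕ Fin k))) p.2) = _
    rw [hmv, hadj, Matrix.one_mulVec]
    simp [hψ, MvPolynomial.bind₁_X_right]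
  -- the localization away from the determinant
  set L : Type _ := Localization.Away d with hL
  set w : S × Fin k → L := fun p =>
    algebraMap (MvPolynomial (Fin n × (S ⊕ Fin k)) F) L (z p) * IsLocalization.Away.invSelf d with hw
  -- units conditions
  have hu1 : ∀ y : Submonoid.powers d, IsUnit (ψ y) := by
    rintro ⟨y, m, rfl⟩
    rw [map_pow, hψd, one_pow]
    exact isUnit_one
  have hu2 : ∀ y : Submonoid.powers d,
      IsUnit ((IsScalarTower.toAlgHom F (MvPolynomial (Fin n × (S ⊕ Fin k)) F) (FractionRing (MvPolynomial (Fin n × (S ⊕ Fin k)) F))) y) := by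
    rintro ⟨y, m, rfl⟩
    rw [isUnit_iff_ne_zero]
    intro h
    exact pow_ne_zero m hd0 ((IsFractionRing.injective (MvPolynomial (Fin n × (S ⊕ Fin k)) F) (FractionRing (MvPolynomial (Fin n × (S ⊕ Fin k)) F))) (by rwa [map_zero]))
  set ψ' : L →ₐ[F] MvPolynomial (Fin n × S) F := IsLocalization.liftAlgHom hu1 with hψ'
  set h : L →ₐ[F] (FractionRing (MvPolynomial (Fin n × (S ⊕ Fin k)) F)) := IsLocalization.liftAlgHom hu2 with hh
  have hψ'alg : ∀ r : (MvPolynomial (Fin n × (S ⊕ Fin k)) F), ψ' (algebraMap (MvPolynomial (Fin n × (S ⊕ Fin k)) F) L r) = ψ r := fun r =>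
    IsLocalization.lift_eq _ r
  have hhalg : ∀ r : (MvPolynomial (Fin n × (S ⊕ Fin k)) F), h (algebraMap (MvPolynomial (Fin n × (S ⊕ Fin k)) F) L r) = algebraMap (MvPolynomial (Fin n × (S ⊕ Fin k)) F) (FractionRing (MvPolynomial (Fin n × (S ⊕ Fin k)) F)) r := fun r =>
    IsLocalization.lift_eq _ r
  -- `w` is algebraically independent
  have hiw : AlgebraicIndependent F w := by
    apply AlgebraicIndependent.of_comp ψ'
    have hinv : ψ' (IsLocalization.Away.invSelf d) = 1 := by
      have h1 := congrArg ψ' (IsLocalization.Away.mul_invSelf (S := L) d)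
      rw [_root_.map_mul, _root_.map_one, hψ'alg, hψd, one_mul] at h1
      exact h1
    have heq : (ψ' ∘ w) = fun p : S × Fin k =>
        (MvPolynomial.X (Fin.castLE hkn p.2, p.1) : MvPolynomial (Fin n × S) F) := by
      funext p
      simp only [Function.comp_apply, hw, _root_.map_mul, hψ'alg, hψz, hinv, mul_one]
    rw [heq]
    exact (MvPolynomial.algebraicIndependent_X (Fin n × S) F).comp
      (fun p : S × Fin k => ((Fin.castLE hkn p.2 : Fin n), p.1))
      (fun p q hpq => by
        have h1 : (Fin.castLE hkn p.2 : Fin n) = Fin.castLE hkn q.2 :=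
          congrArg Prod.fst hpq
        have h2 : p.1 = q.1 := congrArg Prod.snd hpq
        exact Prod.ext h2 (Fin.castLE_injective hkn h1))
  -- `h` is injective
  have hinj : Function.Injective h := by
    rw [hh, IsLocalization.coe_liftAlgHom]
    refine (IsLocalization.lift_injective_iff _).2 fun x y => ?_
    constructor
    · intro hxy
      have hx : x = y := IsLocalization.injective L
        (powers_le_nonZeroDivisors_of_noZeroDivisors hd0) hxy
      rw [hx]
    · intro hxy
      have hx : x = y := IsFractionRing.injective (MvPolynomial (Fin n × (S ⊕ Fin k)) F) (FractionRing (MvPolynomial (Fin n × (S ⊕ Fin k)) F)) hxy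
      rw [hx]
  have hfinal : AlgebraicIndependent F (h ∘ w) := hiw.map' hinj
  -- identify `h ∘ w` with the statement's family
  have hdK : (algebraMap (MvPolynomial (Fin n × (S ⊕ Fin k)) F) (FractionRing (MvPolynomial (Fin n × (S ⊕ Fin k)) F)) d) ≠ 0 := fun hc =>
    hd0 (IsFractionRing.injective (MvPolynomial (Fin n × (S ⊕ Fin k)) F) (FractionRing (MvPolynomial (Fin n × (S ⊕ Fin k)) F)) (by rwa [map_zero]))
  have hinvd : h (IsLocalization.Away.invSelf d) = (algebraMap (MvPolynomial (Fin n × (S ⊕ Fin k)) F) (FractionRing (MvPolynomial (Fin n × (S ⊕ Fin k)) F)) d)⁻¹ := by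
    have h1 := congrArg h (IsLocalization.Away.mul_invSelf (S := L) d)
    rw [_root_.map_mul, _root_.map_one, hhalg] at h1
    field_simp
    linear_combination h1
  have hmvK : ∀ (A : Matrix (Fin k) (Fin k) (MvPolynomial (Fin n × (S ⊕ Fin k)) F)) (v : Fin k → (MvPolynomial (Fin n × (S ⊕ Fin k)) F)) (i : Fin k),
      algebraMap (MvPolynomial (Fin n × (S ⊕ Fin k)) F) (FractionRing (MvPolynomial (Fin n × (S ⊕ Fin k)) F)) ((A.mulVec v) i) =
        ((A.map (algebraMap (MvPolynomial (Fin n × (S ⊕ Fin k)) F) (FractionRing (MvPolynomial (Fin n × (S ⊕ Fin k)) F)))).mulVec fun j => algebraMap (MvPolynomial (Fin n × (S ⊕ Fin k)) F) (FractionRing (MvPolynomial (Fin n × (S ⊕ Fin k)) F)) (v j)) i := by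
    intro A v i
    simp [Matrix.mulVec, dotProduct, map_sum]
  have hdet : (M.map (algebraMap (MvPolynomial (Fin n × (S ⊕ Fin k)) F) (FractionRing (MvPolynomial (Fin n × (S ⊕ Fin k)) F)))).det = algebraMap (MvPolynomial (Fin n × (S ⊕ Fin k)) F) (FractionRing (MvPolynomial (Fin n × (S ⊕ Fin k)) F)) d := by
    have h1 := (algebraMap (MvPolynomial (Fin n × (S ⊕ Fin k)) F) (FractionRing (MvPolynomial (Fin n × (S ⊕ Fin k)) F))).map_det M
    rw [RingHom.mapMatrix_apply] at h1
    rw [hd, h1]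
  have hadjK : (M.map (algebraMap (MvPolynomial (Fin n × (S ⊕ Fin k)) F) (FractionRing (MvPolynomial (Fin n × (S ⊕ Fin k)) F)))).adjugate = M.adjugate.map (algebraMap (MvPolynomial (Fin n × (S ⊕ Fin k)) F) (FractionRing (MvPolynomial (Fin n × (S ⊕ Fin k)) F))) := by
    have h1 := (algebraMap (MvPolynomial (Fin n × (S ⊕ Fin k)) F) (FractionRing (MvPolynomial (Fin n × (S ⊕ Fin k)) F))).map_adjugate M
    rw [RingHom.mapMatrix_apply, RingHom.mapMatrix_apply] at h1
    exact h1.symm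
  have key : (fun p : S × Fin k =>
      (Matrix.of fun i j : Fin k =>
          Xv (F := F) (Fin.castLE hkn i, (Sum.inr j : S ⊕ Fin k)))⁻¹.mulVec
        (fun i : Fin k => Xv (F := F) (Fin.castLE hkn i, (Sum.inl p.1 : S ⊕ Fin k)))
        p.2) = h ∘ w := by
    funext p
    have hA : (Matrix.of fun i j : Fin k =>
        Xv (F := F) (Fin.castLE hkn i, (Sum.inr j : S ⊕ Fin k))) =
        M.map (algebraMap (MvPolynomial (Fin n × (S ⊕ Fin k)) F) (FractionRing (MvPolynomial (Fin n × (S ⊕ Fin k)) F))) :=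
      Matrix.ext fun i j => rfl
    rw [Function.comp_apply, hw, _root_.map_mul, hhalg, hinvd, hA]
    rw [Matrix.inv_def, hdet, Ring.inverse_eq_inv, Matrix.smul_mulVec, Pi.smul_apply,
      smul_eq_mul, hadjK, mul_comm]
    congr 1
    rw [hz]
    exact (hmvK M.adjugate
      (fun i : Fin k => MvPolynomial.X (Fin.castLE hkn i, (Sum.inl p.1 : S ⊕ Fin k))) p.2).symm
  rw [key]
  exact hfinal


end
end

section
/- Let F be a field, n ≥ 2, T and S sets, G = SL(n,F), and fix t_{1,s_1},...,t_{n,s_n} ∈ T with s_1,...,s_n ∈ S. Let (u_s)_{s∈S} and (v_s)_{s∈S} be families of maps T → F^n in V(t_{1,s_1},...,t_{n,s_n}), with invertible matrices U = [u_{s_1}(t_{1,s_1}),...,u_{s_n}(t_{n,s_n})] and V = [v_{s_1}(t_{1,s_1}),...,v_{s_n}(t_{n,s_n})]. Then (u_s) ≃^{SL(n,F)} (v_s) if and only if U^{-1} u_s(t) = V^{-1} v_s(t) for all t ∈ T, s ∈ S, and det(U) = det(V). -/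
open Matrix

lemma isUnit_of_rank_eq {F : Type*} [Field F] {n : ℕ} {A : Matrix (Fin n) (Fin n) F}
    (h : A.rank = n) : IsUnit A := by
  rw [← mulVec_injective_iff_isUnit]
  have hsurj : Function.Surjective A.mulVecLin := by
    rw [← LinearMap.range_eq_top]
    apply Submodule.eq_top_of_finrank_eq
    rw [← Matrix.rank, h, Module.finrank_fin_fun]
  exact (LinearMap.injective_iff_surjective.mpr hsurj)

/-- for families `(u_s), (v_s) ∈ V(t_{1,s_1},...,t_{n,s_n})` with matrices
`U = [u_{s_1}(t_{1,s_1}),...]`, `V = [v_{s_1}(t_{1,s_1}),...]`: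
`(u_s) ≃^{SL(n,F)} (v_s)` iff `U⁻¹ u_s(t) = V⁻¹ v_s(t)` for all `t, s` and
`det U = det V`. -/
theorem families_SL_equivalent_iff {F : Type*} [Field F] {T S : Type*} {n : ℕ}
    (hn : 2 ≤ n) (ss : Fin n → S) (ts : Fin n → T)
    (u v : S → T → Fin n → F)
    (hu : famRank F u = n) (hU : (famColMat u ss ts).rank = n)
    (hv : famRank F v = n) (hV : (famColMat v ss ts).rank = n) :
    (∃ g : Matrix.SpecialLinearGroup (Fin n) F, ∀ s : S, ∀ t : T,
        (g : Matrix (Fin n) (Fin n) F).mulVec (u s t) = v s t) ↔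
      ((∀ s : S, ∀ t : T,
          (famColMat u ss ts)⁻¹.mulVec (u s t) = (famColMat v ss ts)⁻¹.mulVec (v s t)) ∧
        (famColMat u ss ts).det = (famColMat v ss ts).det) := by
  set U := famColMat u ss ts with hUdef
  set V := famColMat v ss ts with hVdef
  have hUu : IsUnit U := isUnit_of_rank_eq hU
  have hVu : IsUnit V := isUnit_of_rank_eq hV
  have hUd : IsUnit U.det := (isUnit_iff_isUnit_det U).mp hUu
  have hVd : IsUnit V.det := (isUnit_iff_isUnit_det V).mp hVu
  constructor
  · rintro ⟨g, hg⟩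
    have hgU : V = (g : Matrix (Fin n) (Fin n) F) * U := by
      ext i j
      have := congrFun (hg (ss j) (ts j)) i
      simpa [hUdef, hVdef, famColMat, mul_apply, mulVec, dotProduct] using this.symm
    have hdet : U.det = V.det := by
      rw [hgU, det_mul, g.det_coe, one_mul]
    refine ⟨fun s t => ?_, hdet⟩
    have hginv : ((g : Matrix (Fin n) (Fin n) F))⁻¹ * (g : Matrix (Fin n) (Fin n) F) = 1 :=
      nonsing_inv_mul _ (by rw [g.det_coe]; exact isUnit_one)
    rw [hgU, Matrix.mul_inv_rev, ← hg s t, mulVec_mulVec, Matrix.mul_assoc, hginv, Matrix.mul_one]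
  · rintro ⟨hvec, hdet⟩
    refine ⟨⟨V * U⁻¹, ?_⟩, fun s t => ?_⟩
    · rw [det_mul, det_nonsing_inv, hdet]
      exact Ring.mul_inverse_cancel V.det hVd
    · show (V * U⁻¹).mulVec (u s t) = v s t
      rw [← mulVec_mulVec, hvec s t, mulVec_mulVec, mul_nonsing_inv _ hVd, one_mulVec]
end

section
/- Let F be a field, n ≥ 2, T and S sets, G a subgroup of GL(n,F), and fix t_{1,s_1},...,t_{n,s_n} ∈ T with s_1,...,s_n ∈ S. Let (u^0_{i,s})_{s∈S, i=1,...,n} be any system of functions u^0_{i,s} : T → F such that the n×n matrix [u^0_{s_1}(t_{1,s_1}),...,u^0_{s_n}(t_{n,s_n})] equals the identity matrix I_n. Then there exists a family (u_s)_{s∈S} ∈ V(t_{1,s_1},...,t_{n,s_n}) such that the matrix U = [u_{s_1}(t_{1,s_1}),...,u_{s_n}(t_{n,s_n})] belongs to G and U^{-1} u_s(t) = u^0_s(t) for all t ∈ T, s ∈ S; moreover any two families satisfying these conditions are G-equivalent. -/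
open Matrix

/-- Theorem 8: for a subgroup `G ≤ GL(n,F)` and `u⁰_{i,s} : T → F` with
`[u⁰_{s_1}(t_{1,s_1}),...,u⁰_{s_n}(t_{n,s_n})] = I_n`, there exists a family
`(u_s) ∈ V(t_{1,s_1},...,t_{n,s_n})` with `U = [u_{s_1}(t_{1,s_1}),...] ∈ G` and
`U⁻¹ u_s(t) = u⁰_s(t)` for all `t, s`; any two such families are `G`-equivalent. -/
theorem families_exists_unique_up_to_G_equivalence {F : Type*} [Field F] {T S : Type*}
    {n : ℕ} (hn : 2 ≤ n) (G : Subgroup (GL (Fin n) F)) (ss : Fin n → S) (ts : Fin n → T)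
    (u0 : Fin n → S → T → F)
    (hI : (Matrix.of fun i j => u0 i (ss j) (ts j)) = (1 : Matrix (Fin n) (Fin n) F)) :
    (∃ u : S → T → Fin n → F,
        famRank F u = n ∧ (famColMat u ss ts).rank = n ∧
        (∃ g ∈ G, ((g : GL (Fin n) F) : Matrix (Fin n) (Fin n) F) = famColMat u ss ts) ∧
        ∀ s : S, ∀ t : T,
          (famColMat u ss ts)⁻¹.mulVec (u s t) = fun i => u0 i s t) ∧
    (∀ u v : S → T → Fin n → F,
        (famRank F u = n ∧ (famColMat u ss ts).rank = n ∧
          (∃ g ∈ G, ((g : GL (Fin n) F) : Matrix (Fin n) (Fin n) F) = famColMat u ss ts) ∧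
          ∀ s : S, ∀ t : T,
            (famColMat u ss ts)⁻¹.mulVec (u s t) = fun i => u0 i s t) →
        (famRank F v = n ∧ (famColMat v ss ts).rank = n ∧
          (∃ g ∈ G, ((g : GL (Fin n) F) : Matrix (Fin n) (Fin n) F) = famColMat v ss ts) ∧
          ∀ s : S, ∀ t : T,
            (famColMat v ss ts)⁻¹.mulVec (v s t) = fun i => u0 i s t) →
        ∃ g ∈ G, ∀ s : S, ∀ t : T,
          ((g : GL (Fin n) F) : Matrix (Fin n) (Fin n) F).mulVec (u s t) = v s t) := by
  have hcolFix : ∀ (w : S → T → Fin n → F), (∃ g ∈ G,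
      ((g : GL (Fin n) F) : Matrix (Fin n) (Fin n) F) = famColMat w ss ts) →
      IsUnit (famColMat w ss ts) := by
    rintro w ⟨g, -, hg⟩
    exact hg ▸ (g : GL (Fin n) F).isUnit
  constructor
  · refine ⟨fun s t i => u0 i s t, ?_, ?_, ?_, ?_⟩
    · have hcol : ∀ j : Fin n, (fun i => u0 i (ss j) (ts j)) = Pi.single j (1 : F) := by
        intro j
        funext i
        have := congrFun (congrFun hI i) j
        simp only [Matrix.of_apply] at this
        rw [this]
        simp [Matrix.one_apply, Pi.single_apply, eq_comm]
      have hspan : Submodule.span F (Set.range fun p : S × T =>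
          (fun s t i => u0 i s t) p.1 p.2) = ⊤ := by
        rw [eq_top_iff, ← (Pi.basisFun F (Fin n)).span_eq]
        refine Submodule.span_mono ?_
        rintro _ ⟨j, rfl⟩
        exact ⟨(ss j, ts j), by simp [hcol j]⟩
      rw [famRank, hspan]
      simp [Module.finrank_pi]
    · have : famColMat (fun s t i => u0 i s t) ss ts = (1 : Matrix (Fin n) (Fin n) F) := hI
      rw [this, Matrix.rank_one]
      simp
    · refine ⟨1, one_mem G, ?_⟩
      have : famColMat (fun s t i => u0 i s t) ss ts = (1 : Matrix (Fin n) (Fin n) F) := hI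
      rw [this]
      rfl
    · intro s t
      have h1 : famColMat (fun s t i => u0 i s t) ss ts = (1 : Matrix (Fin n) (Fin n) F) := hI
      rw [h1, inv_one, Matrix.one_mulVec]
  · rintro u v ⟨-, -, ⟨gu, hgu, hgu'⟩, hu⟩ ⟨-, -, hgvex, hv⟩
    obtain ⟨gv, hgv, hgv'⟩ := hgvex
    refine ⟨gv * gu⁻¹, mul_mem hgv (inv_mem hgu), ?_⟩
    intro s t
    have hcoe : (((gv * gu⁻¹ : GL (Fin n) F)) : Matrix (Fin n) (Fin n) F)
        = (gv : Matrix (Fin n) (Fin n) F) * (gu : Matrix (Fin n) (Fin n) F)⁻¹ := by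
      rw [Units.val_mul, Matrix.coe_units_inv]
    have hdet : IsUnit (famColMat v ss ts).det :=
      (Matrix.isUnit_iff_isUnit_det _).mp (hcolFix v ⟨gv, hgv, hgv'⟩)
    rw [hcoe, ← Matrix.mulVec_mulVec, hgu', hu s t, ← hv s t, Matrix.mulVec_mulVec, hgv',
      Matrix.mul_nonsing_inv _ hdet, Matrix.one_mulVec]
end

section
/- Let F be an infinite field, n ≥ 2, S a set, s_1,...,s_n ∈ S, and let K = F((x_s(t))_{s∈S}, x_{s_1}(t_{1,s_1}),...,x_{s_n}(t_{n,s_n})) be the field of rational functions over F in the components of the vector variables x_s(t), s ∈ S, and x_{s_j}(t_{j,s_j}), j = 1,...,n. Let F̄ = F(([x_{s_1}(t_{1,s_1}),...,x_{s_n}(t_{n,s_n})]^{-1} x_s(t))_{s∈S}) be the subfield of K generated over F by all components of the vectors [x_{s_1}(t_{1,s_1}),...,x_{s_n}(t_{n,s_n})]^{-1} x_s(t), s ∈ S. Then the n² components of the vector variables x_{s_1}(t_{1,s_1}),...,x_{s_n}(t_{n,s_n}) are algebraically independent over F̄. -/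
/-!
All coordinates of the vector variables are independent indeterminates over `F`. Over
`L = F(m)`, where `m` are the entries of `M = [x_{s_1}(t_{1,s_1}),...,x_{s_n}(t_{n,s_n})]`,
the matrix `M` is invertible, and an invertible `L`-linear change of variables preserves
algebraic independence over `L`. Hence the coordinates `y` of the vectors `M⁻¹ x_s(t)` are
independent over `F(m)`, so `(y, m)` is independent over `F`, and reading this the other way
round, `m` is independent over `F(y)`.
-/

open Matrix MvPolynomial

noncomputable section

namespace MvPolynomial

variable {R A ι m : Type*} [CommRing R] [CommRing A] [Algebra R A] [Fintype m]

def linearSubst (M : Matrix m m R) : MvPolynomial (ι × m) R →ₐ[R] MvPolynomial (ι × m) R :=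
  aeval fun p => ∑ j, M p.2 j • X (p.1, j)

theorem linearSubst_mul (M N : Matrix m m R) :
    linearSubst (ι := ι) (M * N) = (linearSubst N).comp (linearSubst M) := by
  ext p : 1
  simp only [linearSubst, AlgHom.comp_apply, aeval_X, map_sum, map_smul, Matrix.mul_apply,
    Finset.smul_sum, smul_smul, Finset.sum_smul]
  exact Finset.sum_comm

theorem linearSubst_one [DecidableEq m] :
    linearSubst (ι := ι) (1 : Matrix m m R) = AlgHom.id R _ := by
  ext p : 1
  simp [linearSubst, Matrix.one_apply, ite_smul]

theorem linearSubst_injective [DecidableEq m] {M : Matrix m m R} (hM : IsUnit M) :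
    Function.Injective (linearSubst (ι := ι) M) := by
  obtain ⟨u, rfl⟩ := hM
  refine Function.LeftInverse.injective (g := linearSubst ↑u⁻¹) fun p => ?_
  rw [← AlgHom.comp_apply, ← linearSubst_mul, u.mul_inv, linearSubst_one, AlgHom.id_apply]

theorem aeval_comp_linearSubst (M : Matrix m m R) (x : ι → m → A) :
    (aeval fun p : ι × m => x p.1 p.2).comp (linearSubst M) =
      aeval fun p => (M.map (algebraMap R A) *ᵥ x p.1) p.2 := by
  ext p : 1
  simp [linearSubst, Matrix.mulVec, dotProduct, Algebra.smul_def]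

end MvPolynomial

theorem Matrix.map_nonsing_inv {R S m : Type*} [CommRing R] [CommRing S] [Fintype m]
    [DecidableEq m] (f : R →+* S) {M : Matrix m m R} (hM : IsUnit M) :
    M⁻¹.map f = (M.map f)⁻¹ := by
  refine (Matrix.inv_eq_left_inv ?_).symm
  rw [← Matrix.map_mul, Matrix.nonsing_inv_mul _ ((Matrix.isUnit_iff_isUnit_det M).1 hM),
    Matrix.map_one _ f.map_zero f.map_one]

namespace AlgebraicIndependent

variable {R A ι ι' : Type*} [CommRing R] [CommRing A] [Algebra R A]

theorem mulVec_of_isUnit {m : Type*} [Fintype m] [DecidableEq m] {x : ι → m → A}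
    (hx : AlgebraicIndependent R fun p : ι × m => x p.1 p.2) {M : Matrix m m R} (hM : IsUnit M) :
    AlgebraicIndependent R fun p : ι × m => (M.map (algebraMap R A) *ᵥ x p.1) p.2 := by
  rw [algebraicIndependent_iff_injective_aeval] at hx ⊢
  rw [← MvPolynomial.aeval_comp_linearSubst]
  exact hx.comp (MvPolynomial.linearSubst_injective hM)

theorem det_ne_zero [Nontrivial R] {m : Type*} [Fintype m] [DecidableEq m] {M : Matrix m m A}
    (hM : AlgebraicIndependent R fun q : m × m => M q.1 q.2) : M.det ≠ 0 := by
  rw [← Matrix.mvPolynomialX_mapMatrix_aeval R M, ← AlgHom.map_det,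
    ← map_zero (aeval (R := R) fun q : m × m => M q.1 q.2)]
  exact (algebraicIndependent_iff_injective_aeval.1 hM).ne (det_mvPolynomialX_ne_zero m R)

theorem sumElim_comm {x : ι → A} {y : ι' → A} :
    AlgebraicIndependent R (Sum.elim x y) ↔ AlgebraicIndependent R (Sum.elim y x) :=
  algebraicIndependent_equiv' (Equiv.sumComm ι ι') (by ext (_ | _) <;> rfl)

end AlgebraicIndependent

open scoped IntermediateField.algebraAdjoinAdjoin in
theorem IntermediateField.algebraicIndependent_sumElim_iff {F E ι ι' : Type*} [Field F]
    [Field E] [Algebra F E] {x : ι → E} {y : ι' → E} :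
    AlgebraicIndependent F (Sum.elim y x) ↔
      AlgebraicIndependent F x ∧ AlgebraicIndependent (adjoin F (Set.range x)) y := by
  rw [algebraicIndependent_adjoin_iff]
  exact AlgebraicIndependent.sumElim_iff

theorem algebraicIndependent_adjoin_inv_mulVec {F K ι m : Type*} [Field F] [Field K]
    [Algebra F K] [Fintype m] [DecidableEq m] {x : ι → m → K} {M : Matrix m m K}
    (h : AlgebraicIndependent F
      (Sum.elim (fun p : ι × m => x p.1 p.2) fun q : m × m => M q.1 q.2)) :
    AlgebraicIndependent
      (IntermediateField.adjoin F (Set.range fun p : ι × m => (M⁻¹ *ᵥ x p.1) p.2))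
      fun q : m × m => M q.1 q.2 := by
  obtain ⟨hM, hx⟩ := IntermediateField.algebraicIndependent_sumElim_iff.1 h
  set L := IntermediateField.adjoin F (Set.range fun q : m × m => M q.1 q.2)
  let M₀ : Matrix m m L := Matrix.of fun i j =>
    ⟨M i j, IntermediateField.subset_adjoin F _ ⟨(i, j), rfl⟩⟩
  have hM₀ : M₀.map (algebraMap L K) = M := rfl
  have hM₀_unit : IsUnit M₀ := by
    rw [Matrix.isUnit_iff_isUnit_det, isUnit_iff_ne_zero]
    refine fun h0 => hM.det_ne_zero ?_
    rw [← hM₀, ← RingHom.mapMatrix_apply, ← RingHom.map_det, h0, map_zero]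
  have hy := hx.mulVec_of_isUnit (x := x) (Matrix.isUnit_nonsing_inv_iff.2 hM₀_unit)
  rw [Matrix.map_nonsing_inv _ hM₀_unit, hM₀] at hy
  exact (IntermediateField.algebraicIndependent_sumElim_iff.1
    (AlgebraicIndependent.sumElim_comm.1
      (IntermediateField.algebraicIndependent_sumElim_iff.2 ⟨hM, hy⟩))).2

theorem algebraicIndependent_Xv {F C : Type*} [Field F] {n : ℕ} :
    AlgebraicIndependent F (Xv (F := F) (n := n) (C := C)) :=
  (algebraicIndependent_X (Fin n × C) F).map'
    (f := IsScalarTower.toAlgHom F _ (FractionRing (MvPolynomial (Fin n × C) F)))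
    (IsFractionRing.injective _ _)

theorem vars_algebraicIndependent_over_Fbar_general {F : Type*} [Field F]
    {S : Type*} {n : ℕ} :
    AlgebraicIndependent
      (IntermediateField.adjoin F
        (Set.range fun p : S × Fin n =>
          (Matrix.of fun i j : Fin n =>
              Xv (F := F) (i, (Sum.inr j : S ⊕ Fin n)))⁻¹.mulVec
            (fun i : Fin n => Xv (F := F) (i, (Sum.inl p.1 : S ⊕ Fin n))) p.2))
      (fun q : Fin n × Fin n => Xv (F := F) (q.1, (Sum.inr q.2 : S ⊕ Fin n))) := by
  let index : (S × Fin n) ⊕ (Fin n × Fin n) → Fin n × (S ⊕ Fin n) :=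
    Sum.elim (fun p => (p.2, .inl p.1)) fun q => (q.1, .inr q.2)
  have h_index : Function.Injective index := by
    rintro (⟨s, i⟩ | ⟨i, j⟩) (⟨s', i'⟩ | ⟨i', j'⟩) h <;> simp_all [index]
  have h : AlgebraicIndependent F
      (Sum.elim (fun p : S × Fin n => Xv (F := F) (p.2, (.inl p.1 : S ⊕ Fin n)))
        fun q : Fin n × Fin n => Xv (F := F) (q.1, (.inr q.2 : S ⊕ Fin n))) := by
    convert algebraicIndependent_Xv.comp index h_index using 1
    ext (_ | _) <;> rfl
  exact algebraicIndependent_adjoin_inv_mulVec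
    (x := fun s i => Xv (F := F) (i, (.inl s : S ⊕ Fin n)))
    (M := Matrix.of fun i j => Xv (F := F) (i, (.inr j : S ⊕ Fin n))) h

/-- Theorem 9, second part: for an infinite field `F` and the field `K` of
rational functions in the vector variables `x_s(t)` (`s ∈ S`, named `Sum.inl s`) and
`x_{s_j}(t_{j,s_j})` (`j = 1,...,n`, named `Sum.inr j`), the `n²` components of the vector
variables `x_{s_1}(t_{1,s_1}),...,x_{s_n}(t_{n,s_n})` are algebraically independent over the
subfield `F̄` generated over `F` by the components of the vectors
`[x_{s_1}(t_{1,s_1}),...,x_{s_n}(t_{n,s_n})]⁻¹ x_s(t)`, `s ∈ S`. -/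
theorem vars_algebraicIndependent_over_Fbar {F : Type*} [Field F] [Infinite F]
    {S : Type*} {n : ℕ} (hn : 2 ≤ n) :
    AlgebraicIndependent
      (IntermediateField.adjoin F
        (Set.range fun p : S × Fin n =>
          (Matrix.of fun i j : Fin n =>
              Xv (F := F) (i, (Sum.inr j : S ⊕ Fin n)))⁻¹.mulVec
            (fun i : Fin n => Xv (F := F) (i, (Sum.inl p.1 : S ⊕ Fin n))) p.2))
      (fun q : Fin n × Fin n => Xv (F := F) (q.1, (Sum.inr q.2 : S ⊕ Fin n))) :=
  vars_algebraicIndependent_over_Fbar_general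

end
end
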